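/- arXiv:2404.18351 — 6 statements merged into one kernel-verified Lean document; each statement's English description precedes it below -/
import Mathlib

section
/- The Weak Zorn's Lemma implies Zorn's Lemma: if every poset in which every upward compatible subset has an upper bound contains a maximal element, then every poset in which every chain has an upper bound contains a maximal element. -/
/-- `Y` is upward compatible in the poset `X`: every finite subset of `Y`
has an upper bound in `X`. -/
def UpCompatible {X : Type*} [PartialOrder X] (Y : Set X) : Prop :=
  ∀ F : Finset X, ↑F ⊆ Y → ∃ x : X, ∀ y ∈ F, y ≤ x

/-- Weak Zorn's Lemma implies Zorn's Lemma. -/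
theorem wzl_implies_zl
    (wzl : ∀ (X : Type u) [PartialOrder X],
      (∀ Y : Set X, UpCompatible Y → ∃ ub : X, ∀ y ∈ Y, y ≤ ub) →
      ∃ m : X, ∀ x : X, ¬ m < x) :
    ∀ (X : Type u) [PartialOrder X],
      (∀ Y : Set X, IsChain (· ≤ ·) Y → ∃ ub : X, ∀ y ∈ Y, y ≤ ub) →
      ∃ m : X, ∀ x : X, ¬ m < x := by
  intro X _ hchain
  classical
  -- The poset of chains of X, ordered by inclusion.
  set C := {c : Set X // IsChain (· ≤ ·) c} with hC
  -- Every upward compatible family of chains has an upper bound (its union).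
  have hub : ∀ Y : Set C, UpCompatible Y → ∃ ub : C, ∀ y ∈ Y, y ≤ ub := by
    intro Y hY
    have hUchain : IsChain (· ≤ ·) (⋃ c ∈ Y, (c : Set X)) := by
      intro a ha b hb hab
      simp only [Set.mem_iUnion] at ha hb
      obtain ⟨c1, hc1Y, hac1⟩ := ha
      obtain ⟨c2, hc2Y, hbc2⟩ := hb
      obtain ⟨d, hd⟩ := hY {c1, c2} (by
        intro z hz
        simp only [Finset.coe_insert, Finset.coe_singleton, Set.mem_insert_iff,
          Set.mem_singleton_iff] at hz
        rcases hz with h | h <;> subst h <;> assumption)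
      have h1 : c1 ≤ d := hd c1 (by simp)
      have h2 : c2 ≤ d := hd c2 (by simp)
      exact d.2 (h1 hac1) (h2 hbc2) hab
    refine ⟨⟨⋃ c ∈ Y, (c : Set X), hUchain⟩, ?_⟩
    intro y hy x hx
    exact Set.mem_biUnion hy hx
  obtain ⟨M, hM⟩ := wzl C hub
  -- M is a maximal chain; take its upper bound m.
  obtain ⟨m, hm⟩ := hchain M.1 M.2
  refine ⟨m, fun x hx => ?_⟩
  -- Then M ∪ {x} is a strictly larger chain, contradiction.
  have hxM : x ∉ M.1 := fun h => absurd (hm x h) (not_le_of_gt hx)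
  have hchain' : IsChain (· ≤ ·) (insert x M.1) := by
    apply M.2.insert
    intro b hb _
    exact Or.inr ((hm b hb).trans hx.le)
  exact hM ⟨insert x M.1, hchain'⟩
    (lt_of_le_of_ne (Set.subset_insert x M.1)
      (fun h => hxM (h ▸ Set.mem_insert x M.1)))
end

section
/- Let R be a domain and X a partially ordered set of variables. The set S of big polynomials in R[X] is multiplicatively closed: 1 ∈ S and the product of two big polynomials is big. -/
/-- A polynomial `f ∈ R[X]` is dominated by the variable `x`: every monomial
appearing in `f` contains some variable `y ≤ x`. -/
def Dominated {R : Type*} [CommRing R] {X : Type*} [PartialOrder X]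
    (f : MvPolynomial X R) (x : X) : Prop :=
  ∀ m ∈ f.support, ∃ y : X, m y ≠ 0 ∧ y ≤ x

/-- A polynomial is small if it is dominated by some variable. -/
def SmallPoly {R : Type*} [CommRing R] {X : Type*} [PartialOrder X]
    (f : MvPolynomial X R) : Prop :=
  ∃ x : X, Dominated f x

/-- A polynomial is big if it is not small. -/
def Big {R : Type*} [CommRing R] {X : Type*} [PartialOrder X]
    (f : MvPolynomial X R) : Prop :=
  ¬ SmallPoly f

open Classical MvPolynomial in
/-- Substitution sending variables `≤ x` to zero. -/
noncomputable def killBelow {R : Type*} [CommRing R] {X : Type*} [PartialOrder X]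
    (x : X) : MvPolynomial X R →ₐ[R] MvPolynomial X R :=
  aeval (fun y => if y ≤ x then 0 else MvPolynomial.X y)

open Classical MvPolynomial in
lemma killBelow_eq_zero_of_dominated {R : Type*} [CommRing R] {X : Type*} [PartialOrder X]
    {f : MvPolynomial X R} {x : X} (h : Dominated f x) : killBelow x f = 0 := by
  rw [f.as_sum, map_sum]
  refine Finset.sum_eq_zero fun m hm => ?_
  obtain ⟨y, hy, hyx⟩ := h m hm
  rw [killBelow, aeval_monomial]
  have : y ∈ m.support := Finsupp.mem_support_iff.mpr hy
  rw [Finsupp.prod, Finset.prod_eq_zero this (by simp [hyx, zero_pow hy]), mul_zero]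

open Classical MvPolynomial in
lemma killBelow_ne_zero {R : Type*} [CommRing R] {X : Type*} [PartialOrder X]
    {f : MvPolynomial X R} {x : X} (h : ¬ Dominated f x) : killBelow x f ≠ 0 := by
  simp only [Dominated, not_forall] at h
  obtain ⟨m, hm, hmdom⟩ := h
  push_neg at hmdom
  have key : ∀ m' : X →₀ ℕ, ∀ c : R,
      killBelow x (monomial m' c) =
        if ∀ y, m' y ≠ 0 → ¬ y ≤ x then monomial m' c else 0 := by
    intro m' c
    rw [killBelow, aeval_monomial]
    split_ifs with hc
    · rw [monomial_eq]
      congr 1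
      refine Finsupp.prod_congr fun y hy => ?_
      rw [if_neg (hc y (Finsupp.mem_support_iff.mp hy))]
    · push_neg at hc
      obtain ⟨y, hy, hyx⟩ := hc
      rw [Finsupp.prod, Finset.prod_eq_zero (Finsupp.mem_support_iff.mpr hy)
        (by simp [hyx, zero_pow hy]), mul_zero]
  intro h0
  have : coeff m (killBelow x f) = coeff m f := by
    conv_lhs => rw [f.as_sum, map_sum]
    rw [Finset.sum_congr rfl fun m' _ => key m' _]
    rw [coeff_sum]
    rw [Finset.sum_eq_single m ?_ ?_]
    · rw [if_pos hmdom, coeff_monomial, if_pos rfl]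
    · intro m' _ hne
      split_ifs
      · rw [coeff_monomial, if_neg hne]
      · exact coeff_zero m
    · intro habs
      exact absurd hm habs
  rw [h0] at this
  simp only [coeff_zero] at this
  exact (MvPolynomial.mem_support_iff.mp hm) this.symm

open MvPolynomial in
/-- Over a domain, the set of big polynomials is multiplicatively closed. -/
theorem big_multiplicative {R : Type*} [CommRing R] [IsDomain R]
    {X : Type*} [PartialOrder X] :
    Big (1 : MvPolynomial X R) ∧
      ∀ f g : MvPolynomial X R, Big f → Big g → Big (f * g) := by
  constructor
  · rintro ⟨x, hx⟩
    have h1 : (0 : X →₀ ℕ) ∈ (1 : MvPolynomial X R).support := by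
      simp [MvPolynomial.mem_support_iff]
    obtain ⟨y, hy, -⟩ := hx 0 h1
    exact hy rfl
  · rintro f g hf hg ⟨x, hx⟩
    have hf' : ¬ Dominated f x := fun h => hf ⟨x, h⟩
    have hg' : ¬ Dominated g x := fun h => hg ⟨x, h⟩
    have := killBelow_eq_zero_of_dominated hx
    rw [map_mul] at this
    rcases mul_eq_zero.mp this with h | h
    · exact killBelow_ne_zero hf' h
    · exact killBelow_ne_zero hg' h
end

section
/- Let R be a domain, X a partially ordered set of variables, and P a maximal small ideal of R[X]. Then P is generated by P ∩ X, the set of variables it contains. -/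
/-- An ideal is small if all of its elements are small. -/
def SmallIdeal {R : Type*} [CommRing R] {X : Type*} [PartialOrder X]
    (I : Ideal (MvPolynomial X R)) : Prop :=
  ∀ f ∈ I, SmallPoly f

/-- A maximal small ideal: a small ideal not properly contained in any small ideal. -/
def MaxSmallIdeal {R : Type*} [CommRing R] {X : Type*} [PartialOrder X]
    (P : Ideal (MvPolynomial X R)) : Prop :=
  SmallIdeal P ∧ ∀ I : Ideal (MvPolynomial X R), SmallIdeal I → P ≤ I → I = P

section Aux

variable {R : Type*} [CommRing R] {X : Type*} [PartialOrder X]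

omit [PartialOrder X] in
/-- aux: a value of a finsupp is at most its sum. -/
lemma aux_le_sum (m : X →₀ ℕ) (a : X) : m a ≤ m.sum fun _ e => e := by
  classical
  by_cases h : a ∈ m.support
  · exact Finset.single_le_sum (fun _ _ => Nat.zero_le _) h
  · simp [Finsupp.notMem_support_iff.1 h]

/-- Key claim: if `q ∈ P` is nonzero and every dominator of `q` lies above some
element of `S`, then some `a ∈ S` has the property that every `p ∈ P` is dominated
by some `w ≥ a`. -/
lemma aux_claim {P : Ideal (MvPolynomial X R)} (hP : MaxSmallIdeal P) :
    ∀ (n : ℕ) (S : Finset X) (q : MvPolynomial X R), S.card ≤ n → q ∈ P → q ≠ 0 →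
    (∀ w, Dominated q w → ∃ a ∈ S, a ≤ w) →
    ∃ a ∈ S, ∀ p ∈ P, ∃ w, a ≤ w ∧ Dominated p w := by
  classical
  intro n
  induction n with
  | zero =>
    intro S q hcard hqP hq0 hdom
    obtain ⟨w0, hw0⟩ := hP.1 q hqP
    obtain ⟨a, haS, _⟩ := hdom w0 hw0
    rw [Finset.card_eq_zero.1 (Nat.le_zero.1 hcard)] at haS
    exact absurd haS (Finset.notMem_empty a)
  | succ n ih =>
    intro S q hcard hqP hq0 hdom
    obtain ⟨w0, hw0⟩ := hP.1 q hqP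
    obtain ⟨a, haS, _⟩ := hdom w0 hw0
    by_cases hstar : ∀ p ∈ P, ∃ w, a ≤ w ∧ Dominated p w
    · exact ⟨a, haS, hstar⟩
    push_neg at hstar
    obtain ⟨p, hpP, hpw⟩ := hstar
    set N := p.totalDegree + 1 with hN
    set s : X →₀ ℕ := Finsupp.single a N with hs
    set q' : MvPolynomial X R := p + q * MvPolynomial.X a ^ N with hq'
    have hXpow : (MvPolynomial.X a : MvPolynomial X R) ^ N = MvPolynomial.monomial s 1 :=
      MvPolynomial.X_pow_eq_monomial
    -- fact: any monomial with `a`-exponent ≥ N is not in `p.support`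
    have hbig : ∀ m : X →₀ ℕ, N ≤ m a → MvPolynomial.coeff m p = 0 := by
      intro m hm
      by_contra hc
      have hmem : m ∈ p.support := MvPolynomial.mem_support_iff.2 hc
      have h1 : (m.sum fun _ e => e) ≤ p.totalDegree := MvPolynomial.le_totalDegree hmem
      have h2 : m a ≤ m.sum fun _ e => e := aux_le_sum m a
      omega
    -- fact 1 : p.support ⊆ q'.support
    have hfact1 : ∀ m ∈ p.support, m ∈ q'.support := by
      intro m hm
      rw [MvPolynomial.mem_support_iff, hq', MvPolynomial.coeff_add, hXpow,
        MvPolynomial.coeff_mul_monomial']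
      have hnle : ¬ s ≤ m := by
        intro hle
        have : N ≤ m a := by
          have := Finsupp.single_le_iff.1 (hs ▸ hle)
          exact this
        exact MvPolynomial.mem_support_iff.1 hm (hbig m this)
      rw [if_neg hnle, add_zero]
      exact MvPolynomial.mem_support_iff.1 hm
    -- fact 2 : shifted support of q inside q'.support
    have hfact2 : ∀ m ∈ q.support, m + s ∈ q'.support := by
      intro m hm
      rw [MvPolynomial.mem_support_iff, hq', MvPolynomial.coeff_add, hXpow,
        MvPolynomial.coeff_mul_monomial]
      have hp0 : MvPolynomial.coeff (m + s) p = 0 := by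
        apply hbig
        simp [hs]
      rw [hp0, zero_add, mul_one]
      exact MvPolynomial.mem_support_iff.1 hm
    have hq'P : q' ∈ P := P.add_mem hpP (P.mul_mem_right _ hqP)
    have hq'0 : q' ≠ 0 := by
      obtain ⟨m, hm⟩ := MvPolynomial.support_nonempty.2 hq0
      exact fun h => by simpa [h] using hfact2 m hm
    have hdom' : ∀ w, Dominated q' w → ∃ a' ∈ S.erase a, a' ≤ w := by
      intro w hw
      have hpd : Dominated p w := fun m hm => hw m (hfact1 m hm)
      have haw : ¬ a ≤ w := fun h => hpw w h hpd
      have hqd : Dominated q w := by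
        intro m hm
        obtain ⟨y, hy1, hy2⟩ := hw (m + s) (hfact2 m hm)
        refine ⟨y, ?_, hy2⟩
        have hya : y ≠ a := fun h => haw (h ▸ hy2)
        simpa [hs, Finsupp.single_apply, hya.symm] using hy1
      obtain ⟨a', ha'S, ha'w⟩ := hdom w hqd
      exact ⟨a', Finset.mem_erase.2 ⟨fun h => haw (h ▸ ha'w), ha'S⟩, ha'w⟩
    have hcard' : (S.erase a).card ≤ n := by
      have := Finset.card_erase_of_mem haS
      omega
    obtain ⟨a', ha'S, ha'⟩ := ih (S.erase a) q' hcard' hq'P hq'0 hdom'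
    exact ⟨a', Finset.mem_of_mem_erase ha'S, ha'⟩

/-- If every `p ∈ P` is dominated by some `w ≥ a`, then `X a ∈ P`. -/
lemma aux_step {P : Ideal (MvPolynomial X R)} (hP : MaxSmallIdeal P) (a : X)
    (ha : ∀ p ∈ P, ∃ w, a ≤ w ∧ Dominated p w) : MvPolynomial.X a ∈ P := by
  classical
  have hsmall : SmallIdeal (P ⊔ Ideal.span {(MvPolynomial.X a : MvPolynomial X R)}) := by
    intro f hf
    obtain ⟨p, hpP, z, hz, rfl⟩ := Submodule.mem_sup.1 hf
    obtain ⟨g, rfl⟩ := Ideal.mem_span_singleton'.1 hz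
    obtain ⟨w, haw, hpd⟩ := ha p hpP
    refine ⟨w, fun m hm => ?_⟩
    rcases Finset.mem_union.1 (MvPolynomial.support_add hm) with h | h
    · exact hpd m h
    · refine ⟨a, ?_, haw⟩
      have hc : MvPolynomial.coeff m (g * MvPolynomial.X a) ≠ 0 :=
        MvPolynomial.mem_support_iff.1 h
      rw [MvPolynomial.coeff_mul_X'] at hc
      by_contra hma
      rw [if_neg (by simpa [Finsupp.mem_support_iff] using hma)] at hc
      exact hc rfl
  have heq := hP.2 _ hsmall le_sup_left
  have : MvPolynomial.X a ∈ P ⊔ Ideal.span {(MvPolynomial.X a : MvPolynomial X R)} :=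
    (le_sup_right : Ideal.span {(MvPolynomial.X a : MvPolynomial X R)} ≤ _)
      (Ideal.subset_span rfl)
  rwa [heq] at this

end Aux

/-- A maximal small ideal is generated by the set of variables it contains. -/
theorem maxSmallIdeal_span_vars {R : Type*} [CommRing R] [IsDomain R]
    {X : Type*} [PartialOrder X] (P : Ideal (MvPolynomial X R))
    (hP : MaxSmallIdeal P) :
    P = Ideal.span (MvPolynomial.X '' {x : X | MvPolynomial.X x ∈ P}) := by
  classical
  set J : Ideal (MvPolynomial X R) := Ideal.span (MvPolynomial.X '' {x : X | MvPolynomial.X x ∈ P}) with hJ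
  have hJP : J ≤ P := by
    rw [hJ, Ideal.span_le]
    rintro _ ⟨y, hy, rfl⟩
    exact hy
  refine le_antisymm (fun f hf => ?_) hJP
  set good : (X →₀ ℕ) → Prop := fun m => ∃ y, m y ≠ 0 ∧ MvPolynomial.X y ∈ P with hgood
  set fg := ∑ m ∈ f.support.filter good, MvPolynomial.monomial m (MvPolynomial.coeff m f)
    with hfg
  set fb := ∑ m ∈ f.support.filter (fun m => ¬ good m),
    MvPolynomial.monomial m (MvPolynomial.coeff m f) with hfb
  have hsplit : fg + fb = f := by
    rw [hfg, hfb, Finset.sum_filter_add_sum_filter_not, MvPolynomial.support_sum_monomial_coeff]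
  -- each good monomial lies in J
  have hfgJ : fg ∈ J := by
    apply Ideal.sum_mem
    intro m hm
    obtain ⟨y, hy1, hy2⟩ := (Finset.mem_filter.1 hm).2
    have hXy : (MvPolynomial.X y : MvPolynomial X R) ∈ J :=
      Ideal.subset_span ⟨y, hy2, rfl⟩
    have hdecomp : MvPolynomial.monomial m (MvPolynomial.coeff m f) =
        MvPolynomial.monomial (m - Finsupp.single y 1) (MvPolynomial.coeff m f) *
          MvPolynomial.X y := by
      rw [MvPolynomial.X, MvPolynomial.monomial_mul, mul_one, tsub_add_cancel_of_le]
      exact Finsupp.single_le_iff.2 (Nat.one_le_iff_ne_zero.2 hy1)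
    rw [hdecomp]
    exact J.mul_mem_left _ hXy
  have hfbP : fb ∈ P := by
    have : fb = f - fg := by rw [← hsplit]; ring
    rw [this]
    exact P.sub_mem hf (hJP hfgJ)
  by_cases hfb0 : fb = 0
  · rw [← hsplit, hfb0, add_zero]; exact hfgJ
  · exfalso
    -- support of fb consists of bad monomials
    have hcoeff_fb : ∀ m, m ∈ fb.support → ¬ good m := by
      intro m hm
      have hc : MvPolynomial.coeff m fb ≠ 0 := MvPolynomial.mem_support_iff.1 hm
      rw [hfb, MvPolynomial.coeff_sum] at hc
      simp only [MvPolynomial.coeff_monomial] at hc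
      rw [Finset.sum_ite_eq' (f.support.filter fun m => ¬ good m) m
        (fun m' => MvPolynomial.coeff m' f)] at hc
      by_cases hmem : m ∈ f.support.filter fun m' => ¬ good m'
      · exact (Finset.mem_filter.1 hmem).2
      · rw [if_neg hmem] at hc; exact absurd rfl hc
    obtain ⟨m0, hm0⟩ := MvPolynomial.support_nonempty.2 hfb0
    have hdom : ∀ w, Dominated fb w → ∃ a ∈ m0.support, a ≤ w := by
      intro w hw
      obtain ⟨y, hy1, hy2⟩ := hw m0 hm0
      exact ⟨y, Finsupp.mem_support_iff.2 hy1, hy2⟩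
    obtain ⟨a, haS, ha⟩ := aux_claim hP m0.support.card m0.support fb le_rfl hfbP hfb0 hdom
    have hXaP : MvPolynomial.X a ∈ P := aux_step hP a ha
    exact hcoeff_fb m0 hm0 ⟨a, Finsupp.mem_support_iff.1 haS, hXaP⟩
end

section
/- Let R be a domain, X a partially ordered set of variables, and P a maximal small ideal of R[X]. Then Y = P ∩ X is upward compatible: every finite subset of Y has an upper bound in X. -/
open MvPolynomial

theorem MvPolynomial.coeff_single_one_sum_X {R σ : Type*} [CommSemiring R] {F : Finset σ}
    {y : σ} (hy : y ∈ F) : coeff (Finsupp.single y 1) (∑ z ∈ F, X z : MvPolynomial σ R) = 1 := by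
  classical
  rw [coeff_sum, Finset.sum_eq_single_of_mem y hy, coeff_X_same]
  intro z _ hzy
  rw [coeff_X, if_neg]
  rwa [Finsupp.single_left_inj one_ne_zero]

section

variable {R σ : Type*} [CommRing R] [PartialOrder σ]

theorem Dominated.le_of_single_mem_support {f : MvPolynomial σ R} {x y : σ} {n : ℕ}
    (hf : Dominated f x) (hy : Finsupp.single y n ∈ f.support) : y ≤ x := by
  obtain ⟨z, hz, hzx⟩ := hf _ hy
  rwa [← (Finsupp.single_apply_ne_zero.mp hz).1]

/-- The sum of the variables of `F` lies in the ideal, and each `y ∈ F` occurs in it as the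
monomial `y`, so a variable dominating the sum bounds `F`. -/
theorem SmallIdeal.upCompatible [Nontrivial R] {I : Ideal (MvPolynomial σ R)}
    (hI : SmallIdeal I) : UpCompatible {x : σ | X x ∈ I} := by
  intro F hF
  obtain ⟨x, hx⟩ := hI (∑ y ∈ F, X y) (Ideal.sum_mem I fun y hy => hF hy)
  refine ⟨x, fun y hy => hx.le_of_single_mem_support (n := 1) ?_⟩
  rw [mem_support_iff, coeff_single_one_sum_X hy]
  exact one_ne_zero

end

/-- The set of variables contained in a maximal small ideal is upward compatible. -/
theorem maxSmallIdeal_vars_compatible {R : Type*} [CommRing R] [IsDomain R]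
    {X : Type*} [PartialOrder X] (P : Ideal (MvPolynomial X R))
    (hP : MaxSmallIdeal P) :
    UpCompatible {x : X | MvPolynomial.X x ∈ P} :=
  hP.1.upCompatible
end

section
/- Let R be a domain, X a partially ordered set of variables, and P a maximal small ideal of R[X]. Then Y = P ∩ X is a maximal compatible subset of X: if Y ⊆ Y' ⊆ X and Y' is upward compatible, then Y' = Y. -/
/-!
Let `Y = {x | X x ∈ P}`. Every monomial of an element of `P` contains a variable of `Y`: otherwise
some monomial `m` of `p ∈ P` has, for each of its variables `v`, a witness in `P` dominated by no
variable above `v`, while `p` and these witnesses, like any finitely many elements of a small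
ideal, have a common dominating variable. Now for `z` in an upward compatible `Y' ⊇ Y` and
`q ∈ P`, the variables of `Y` chosen in the monomials of `q`, together with `z`, have an upper
bound `x`, which dominates every element `q + g * X z` of `P + (X z)`. So `P + (X z)` is small,
and maximality gives `X z ∈ P`.
-/

open MvPolynomial

section Support

variable {R σ : Type*} [CommSemiring R]

theorem support_subset_support_add_of_disjoint {f g : MvPolynomial σ R}
    (h : Disjoint f.support g.support) : f.support ⊆ (f + g).support := by
  classical
  simpa [Finset.sdiff_eq_self_of_disjoint h] using support_sdiff_support_subset_support_add f g

theorem disjoint_support_mul_X_pow_degreeOf_succ (g q : MvPolynomial σ R) (v : σ) :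
    Disjoint g.support (q * X v ^ (g.degreeOf v + 1)).support := by
  classical
  refine Finset.disjoint_left.2 fun m hg hq => ?_
  rw [X_pow_eq_monomial, mem_support_iff, coeff_mul_monomial'] at hq
  split_ifs at hq with hle
  · have hv := hle v
    have hdeg := monomial_le_degreeOf v hg
    simp only [Finsupp.single_eq_same] at hv
    omega
  · exact hq rfl

end Support

section Dominated

variable {R σ : Type*} [CommRing R] [PartialOrder σ]

theorem dominated_iff_mem_span_X {f : MvPolynomial σ R} {x : σ} :
    Dominated f x ↔ f ∈ Ideal.span (X '' Set.Iic x) := by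
  simp only [mem_ideal_span_X_image, Set.mem_Iic, Dominated, and_comm]

theorem Dominated.of_support_subset {f g : MvPolynomial σ R} {x : σ}
    (hfg : f.support ⊆ g.support) (hg : Dominated g x) : Dominated f x :=
  fun m hm => hg m (hfg hm)

theorem Dominated.of_mul_X_pow {q : MvPolynomial σ R} {v x : σ} {n : ℕ}
    (h : Dominated (q * X v ^ n) x) : Dominated q x ∨ v ≤ x := by
  classical
  refine or_iff_not_imp_right.2 fun hvx m hm => ?_
  have hmn : m + Finsupp.single v n ∈ (q * X v ^ n).support := by
    rwa [X_pow_eq_monomial, mem_support_iff, coeff_mul_monomial, mul_one, ← mem_support_iff]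
  obtain ⟨y, hy, hyx⟩ := h _ hmn
  have hyv : y ≠ v := by rintro rfl; exact hvx hyx
  exact ⟨y, by simpa [Finsupp.single_apply, hyv.symm] using hy, hyx⟩

/-- The polynomial `g` packs shifted copies `q * X v ^ N` of the given polynomials, with `N` so
large that the copies have pairwise disjoint supports; a variable dominating `g` then dominates
each copy. -/
theorem exists_mem_forall_dominated_or_le (I : Ideal (MvPolynomial σ R))
    (S : Finset (MvPolynomial σ R × σ)) (hS : ∀ p ∈ S, p.1 ∈ I) :
    ∃ g ∈ I, ∀ x, Dominated g x → ∀ p ∈ S, Dominated p.1 x ∨ p.2 ≤ x := by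
  classical
  induction S using Finset.induction_on with
  | empty => exact ⟨0, I.zero_mem, by simp⟩
  | insert p S _ ih =>
    obtain ⟨q, v⟩ := p
    rw [Finset.forall_mem_insert] at hS
    obtain ⟨g, hgI, hg⟩ := ih hS.2
    set B := q * X v ^ (g.degreeOf v + 1)
    have hdisj : Disjoint g.support B.support := disjoint_support_mul_X_pow_degreeOf_succ g q v
    refine ⟨g + B, I.add_mem hgI (I.mul_mem_right _ hS.1), fun x hx => ?_⟩
    rw [Finset.forall_mem_insert]
    have hgx : Dominated g x := hx.of_support_subset (support_subset_support_add_of_disjoint hdisj)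
    have hBx : Dominated B x := hx.of_support_subset <| by
      rw [add_comm]
      exact support_subset_support_add_of_disjoint hdisj.symm
    exact ⟨hBx.of_mul_X_pow, hg x hgx⟩

theorem SmallIdeal.exists_forall_dominated {I : Ideal (MvPolynomial σ R)} (hI : SmallIdeal I)
    (F : Finset (MvPolynomial σ R)) (hF : ∀ q ∈ F, q ∈ I) :
    ∃ x, ∀ q ∈ F, Dominated q x := by
  classical
  obtain ⟨g, hgI, hg⟩ := exists_mem_forall_dominated_or_le I (F ×ˢ F.biUnion vars)
    (fun p hp => hF p.1 (Finset.mem_product.1 hp).1)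
  obtain ⟨x, hgx⟩ := hI g hgI
  refine ⟨x, fun q hq m hm => ?_⟩
  obtain ⟨x', hqx'⟩ := hI q (hF q hq)
  obtain ⟨y, hy, -⟩ := hqx' m hm
  have hqy : (q, y) ∈ F ×ˢ F.biUnion vars :=
    Finset.mem_product.2 ⟨hq, Finset.mem_biUnion.2
      ⟨q, hq, (mem_vars_iff_mem_support y).2 ⟨m, hm, Finsupp.mem_support_iff.2 hy⟩⟩⟩
  rcases hg x hgx _ hqy with hqx | hyx
  · exact hqx m hm
  · exact ⟨y, hy, hyx⟩

theorem smallIdeal_sup_span_X {I : Ideal (MvPolynomial σ R)} {v : σ}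
    (h : ∀ q ∈ I, ∃ x, v ≤ x ∧ Dominated q x) : SmallIdeal (I ⊔ Ideal.span {X v}) := by
  intro f hf
  obtain ⟨q, hq, r, hr, rfl⟩ := Submodule.mem_sup.1 hf
  obtain ⟨x, hvx, hqx⟩ := h q hq
  have hvx' : (X v : MvPolynomial σ R) ∈ X '' Set.Iic x := ⟨v, hvx, rfl⟩
  have hr' : r ∈ Ideal.span (X '' Set.Iic x) :=
    Ideal.span_mono (Set.singleton_subset_iff.2 hvx') hr
  exact ⟨x, dominated_iff_mem_span_X.2 (Ideal.add_mem _ (dominated_iff_mem_span_X.1 hqx) hr')⟩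

theorem MaxSmallIdeal.X_mem_of_forall_dominated {P : Ideal (MvPolynomial σ R)}
    (hP : MaxSmallIdeal P) {v : σ} (h : ∀ q ∈ P, ∃ x, v ≤ x ∧ Dominated q x) :
    X v ∈ P := by
  rw [← hP.2 _ (smallIdeal_sup_span_X h) le_sup_left]
  exact Ideal.mem_sup_right (Ideal.mem_span_singleton_self _)

theorem MaxSmallIdeal.exists_X_mem {P : Ideal (MvPolynomial σ R)} (hP : MaxSmallIdeal P)
    {p : MvPolynomial σ R} (hp : p ∈ P) {m : σ →₀ ℕ} (hm : m ∈ p.support) :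
    ∃ v, m v ≠ 0 ∧ X v ∈ P := by
  classical
  suffices ∃ v, m v ≠ 0 ∧ ∀ q ∈ P, ∃ x, v ≤ x ∧ Dominated q x by
    obtain ⟨v, hv, h⟩ := this
    exact ⟨v, hv, hP.X_mem_of_forall_dominated h⟩
  by_contra! hcon
  choose! Q hQP hQ using hcon
  obtain ⟨x, hx⟩ := hP.1.exists_forall_dominated (insert p (m.support.image Q)) <| by
    simpa [Finset.forall_mem_insert, hp] using fun v hv => hQP v hv
  obtain ⟨v, hv, hvx⟩ := hx p (Finset.mem_insert_self _ _) m hm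
  exact hQ v hv x hvx (hx _ (Finset.mem_insert_of_mem
    (Finset.mem_image_of_mem Q (Finsupp.mem_support_iff.2 hv))))

end Dominated

theorem maxSmallIdeal_vars_maxCompatible_general {R : Type*} [CommRing R]
    {X : Type*} [PartialOrder X] (P : Ideal (MvPolynomial X R))
    (hP : MaxSmallIdeal P) :
    ∀ Y' : Set X, {x : X | MvPolynomial.X x ∈ P} ⊆ Y' → UpCompatible Y' →
      Y' = {x : X | MvPolynomial.X x ∈ P} := by
  classical
  intro Y' hsub hcomp
  refine Set.Subset.antisymm (fun z hz => hP.X_mem_of_forall_dominated fun q hq => ?_) hsub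
  -- lets `choose!` produce a plain function `(X →₀ ℕ) → X`
  have : Nonempty X := ⟨z⟩
  choose! w hw hwP using fun m (hm : m ∈ q.support) => hP.exists_X_mem hq hm
  obtain ⟨x, hx⟩ := hcomp (insert z (q.support.image w)) <| by
    rw [Finset.coe_insert, Finset.coe_image, Set.insert_subset_iff, Set.image_subset_iff]
    exact ⟨hz, fun m hm => hsub (hwP m hm)⟩
  exact ⟨x, hx z (Finset.mem_insert_self _ _), fun m hm =>
    ⟨w m, hw m hm, hx _ (Finset.mem_insert_of_mem (Finset.mem_image_of_mem w hm))⟩⟩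

/-- The set of variables contained in a maximal small ideal is a maximal
compatible subset of `X`. -/
theorem maxSmallIdeal_vars_maxCompatible {R : Type*} [CommRing R] [IsDomain R]
    {X : Type*} [PartialOrder X] (P : Ideal (MvPolynomial X R))
    (hP : MaxSmallIdeal P) :
    ∀ Y' : Set X, {x : X | MvPolynomial.X x ∈ P} ⊆ Y' → UpCompatible Y' →
      Y' = {x : X | MvPolynomial.X x ∈ P} :=
  maxSmallIdeal_vars_maxCompatible_general P hP
end

section
/- Let R be a domain and X a partially ordered set of variables. If Y ⊆ X is a maximal compatible subset, then the ideal (Y) of R[X] generated by Y is a maximal small ideal. -/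
/-- If `Y` is a maximal compatible subset of `X`, the ideal generated by `Y`
is a maximal small ideal of `R[X]`. -/
theorem span_maxCompatible_maxSmall {R : Type*} [CommRing R] [IsDomain R]
    {X : Type*} [PartialOrder X] (Y : Set X) (hY : UpCompatible Y)
    (hmax : ∀ Y' : Set X, Y ⊆ Y' → UpCompatible Y' → Y' = Y) :
    MaxSmallIdeal (Ideal.span (MvPolynomial.X '' Y : Set (MvPolynomial X R))) := by
  classical
  constructor
  · -- the span is a small ideal
    intro f hf
    rw [MvPolynomial.mem_ideal_span_X_image] at hf
    choose y hyY hy using hf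
    set T : Finset X := f.support.attach.image (fun m => y m.1 m.2) with hT
    obtain ⟨x, hx⟩ := hY T (by
      intro u hu
      simp only [hT, Finset.coe_image, Set.mem_image, Finset.mem_coe,
        Finset.mem_attach] at hu
      obtain ⟨⟨m, hm⟩, -, rfl⟩ := hu
      exact hyY m hm)
    refine ⟨x, fun m hm => ⟨y m hm, hy m hm, ?_⟩⟩
    exact hx _ (Finset.mem_image.mpr ⟨⟨m, hm⟩, Finset.mem_attach _ _, rfl⟩)
  · -- maximality
    intro I hI hPI
    refine le_antisymm ?_ hPI
    intro f hf
    by_contra hfP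
    rw [MvPolynomial.mem_ideal_span_X_image] at hfP
    push_neg at hfP
    obtain ⟨m, hm, hmY⟩ := hfP
    -- m has at least one variable (else the constant monomial contradicts smallness)
    obtain ⟨x0, hx0⟩ := hI f hf
    obtain ⟨z0, hz0m, -⟩ := hx0 m hm
    have hz0Y : z0 ∉ Y := fun h => hz0m (hmY z0 h)
    -- for every variable z of m, Y ∪ {z} is not compatible
    have key : ∀ z ∈ m.support, ∃ F : Finset X, ↑F ⊆ Y ∪ {z} ∧
        ∀ x : X, ∃ u ∈ F, ¬ u ≤ x := by
      intro z hz
      have hzY : z ∉ Y := fun h => (Finsupp.mem_support_iff.mp hz) (hmY z h)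
      by_contra hcon
      push_neg at hcon
      have : UpCompatible (Y ∪ {z}) := by
        intro F hF
        obtain ⟨x, hx⟩ := hcon F hF
        exact ⟨x, hx⟩
      have := hmax (Y ∪ {z}) Set.subset_union_left this
      exact hzY (this ▸ Set.mem_union_right Y rfl)
    choose F hF1 hF2 using key
    set G : Finset X := m.support.attach.biUnion (fun z => F z.1 z.2) with hG
    set GY : Finset X := G.filter (fun u => u ∈ Y) with hGY
    set g : MvPolynomial X R :=
      f * MvPolynomial.monomial m 1 + ∑ u ∈ GY, MvPolynomial.X u with hg
    have hgI : g ∈ I := by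
      refine I.add_mem (I.mul_mem_right _ hf) (Ideal.sum_mem _ fun u hu => ?_)
      refine hPI (Ideal.subset_span ⟨u, ?_, rfl⟩)
      exact (Finset.mem_filter.mp hu).2
    obtain ⟨x, hx⟩ := hI g hgI
    -- every u ∈ GY satisfies u ≤ x
    have hGYle : ∀ u ∈ GY, u ≤ x := by
      intro u hu
      have huY : u ∈ Y := (Finset.mem_filter.mp hu).2
      have huz0 : u ≠ z0 := fun h => hz0Y (h ▸ huY)
      have hsupp : (Finsupp.single u 1 : X →₀ ℕ) ∈ g.support := by
        rw [MvPolynomial.mem_support_iff, hg, MvPolynomial.coeff_add]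
        have h1 : MvPolynomial.coeff (Finsupp.single u 1)
            (f * MvPolynomial.monomial m 1) = 0 := by
          rw [MvPolynomial.coeff_mul_monomial']
          rw [if_neg]
          intro hle
          have := hle z0
          rw [Finsupp.single_apply, if_neg huz0] at this
          omega
        have h2 : MvPolynomial.coeff (Finsupp.single u 1)
            (∑ v ∈ GY, (MvPolynomial.X v : MvPolynomial X R)) = 1 := by
          rw [MvPolynomial.coeff_sum]
          rw [Finset.sum_eq_single u]
          · rw [MvPolynomial.coeff_X', if_pos rfl]
          · intro v hv hvu
            rw [MvPolynomial.coeff_X', if_neg]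
            exact fun h => hvu (Finsupp.single_left_injective one_ne_zero h)
          · intro h; exact absurd hu h
        simp only [h1, h2, zero_add]
        exact one_ne_zero
      obtain ⟨w, hw, hwx⟩ := hx _ hsupp
      have : w = u := by
        by_contra hwu
        rw [Finsupp.single_apply, if_neg (fun h => hwu h.symm)] at hw
        exact hw rfl
      exact this ▸ hwx
    -- the monomial m + m belongs to g
    have hmm : (m + m : X →₀ ℕ) ∈ g.support := by
      rw [MvPolynomial.mem_support_iff, hg, MvPolynomial.coeff_add]
      have h1 : MvPolynomial.coeff (m + m) (f * MvPolynomial.monomial m 1) =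
          MvPolynomial.coeff m f := by
        rw [MvPolynomial.coeff_mul_monomial, mul_one]
      have h2 : MvPolynomial.coeff (m + m)
          (∑ v ∈ GY, (MvPolynomial.X v : MvPolynomial X R)) = 0 := by
        rw [MvPolynomial.coeff_sum]
        refine Finset.sum_eq_zero fun v hv => ?_
        rw [MvPolynomial.coeff_X', if_neg]
        intro h
        have := congrArg (fun p : X →₀ ℕ => p z0) h
        simp only [Finsupp.single_apply, Finsupp.add_apply] at this
        rcases eq_or_ne v z0 with h' | h'
        · rw [if_pos h'] at this; omega
        · rw [if_neg h'] at this; omega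
      rw [h1, h2, add_zero]
      exact MvPolynomial.mem_support_iff.mp hm
    obtain ⟨w, hw, hwx⟩ := hx _ hmm
    have hwm : w ∈ m.support := by
      rw [Finsupp.mem_support_iff]
      rw [Finsupp.add_apply] at hw
      omega
    obtain ⟨u, huF, hux⟩ := hF2 w hwm x
    have huYz : u ∈ Y ∪ {w} := hF1 w hwm huF
    rcases huYz with huY | huw
    · refine hux (hGYle u ?_)
      refine Finset.mem_filter.mpr ⟨?_, huY⟩
      exact Finset.mem_biUnion.mpr ⟨⟨w, hwm⟩, Finset.mem_attach _ _, huF⟩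
    · exact hux (huw ▸ hwx)
end
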